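/- For every continuous function f on the closed unit disc D and every n, the expectation over a uniformly random x ∈ P_n satisfies E|∫_D f dΞ_n − f(0)| ≤ 2 (max_{z ∈ D} |f(z)|) · p_n, where Ξ_n is the uniform distribution on the eigenvalues (with multiplicity) of the action matrix A_x and p_n = R_n / (2^n N_n). -/

import Mathlib

open scoped BigOperators

/-- A partial automorphism of the `n`-level binary rooted tree.  Vertices of the tree are
encoded as binary strings of length at most `n`: the root is the empty string and the two
children of a vertex `l` are `l ++ [b]` for `b : Bool`.  A partial automorphism is an
injective partial map (with `none` standing for "undefined") whose domain is a subtree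
containing the root, which fixes the root and maps children of a vertex in its domain to
children of its image; equivalently, it is an isomorphism between two subtrees
containing the root. -/
structure PartialAut (n : ℕ) where
  toFun : List Bool → Option (List Bool)
  length_le : ∀ l m, toFun l = some m → l.length ≤ n
  root_map : toFun [] = some []
  child_map : ∀ l b m, toFun (l ++ [b]) = some m →
      ∃ u b', toFun l = some u ∧ m = u ++ [b']
  inj : ∀ l l' m, toFun l = some m → toFun l' = some m → l = l'

namespace PartialAut

variable {n : ℕ}

theorem ext' {x y : PartialAut n} (h : x.toFun = y.toFun) : x = y := by
  cases x; cases y; cases h; rfl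

theorem toFun_eq_none {x : PartialAut n} {l : List Bool} (h : ¬ l.length ≤ n) :
    x.toFun l = none := by
  cases hx : x.toFun l with
  | none => rfl
  | some m => exact absurd (x.length_le l m hx) h

theorem length_map {x : PartialAut n} : ∀ l m : List Bool, x.toFun l = some m →
    m.length = l.length := by
  intro l
  induction l using List.reverseRecOn with
  | nil => intro m h; rw [x.root_map] at h; cases h; rfl
  | append_singleton l b ih =>
      intro m h
      obtain ⟨u, b', hu, rfl⟩ := x.child_map l b m h
      simp [ih u hu]

/-- Composition of partial automorphisms (first apply `x`, then `y`), together with the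
identity automorphism, makes `PartialAut n` a monoid (in particular a semigroup). -/
instance : Monoid (PartialAut n) where
  mul x y :=
    { toFun := fun l => (x.toFun l).bind y.toFun
      length_le := by
        intro l m h
        try dsimp only at h
        cases hx : x.toFun l with
        | none => rw [hx] at h; cases h
        | some k => exact x.length_le l k hx
      root_map := by (try dsimp only); rw [x.root_map]; simpa using y.root_map
      child_map := by
        intro l b m h
        try dsimp only at h ⊢
        cases hx : x.toFun (l ++ [b]) with
        | none => rw [hx] at h; cases h
        | some k =>
          rw [hx, Option.bind_some] at h
          obtain ⟨u, b', hu, rfl⟩ := x.child_map l b k hx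
          obtain ⟨w, b'', hw, rfl⟩ := y.child_map u b' m h
          exact ⟨w, b'', by rw [hu, Option.bind_some, hw], rfl⟩
      inj := by
        intro l l' m h h'
        try dsimp only at h h'
        cases hx : x.toFun l with
        | none => rw [hx] at h; cases h
        | some k =>
          cases hx' : x.toFun l' with
          | none => rw [hx'] at h'; cases h'
          | some k' =>
            rw [hx, Option.bind_some] at h
            rw [hx', Option.bind_some] at h'
            have hkk : k = k' := y.inj k k' m h h'
            subst hkk
            exact x.inj l l' k hx hx' }
  one :=
    { toFun := fun l => if l.length ≤ n then some l else none
      length_le := by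
        intro l m h
        try dsimp only at h
        split at h
        · assumption
        · cases h
      root_map := by simp
      child_map := by
        intro l b m h
        try dsimp only at h ⊢
        split at h
        · cases h
          have hl : l.length ≤ n := by
            simp only [List.length_append, List.length_cons, List.length_nil] at *
            omega
          exact ⟨l, b, by simp [hl], rfl⟩
        · cases h
      inj := by
        intro l l' m h h'
        try dsimp only at h h'
        split at h
        · cases h
          split at h'
          · cases h'; rfl
          · cases h'
        · cases h }
  mul_assoc x y z := ext' (funext fun l => Option.bind_assoc _ _ _)
  one_mul x := by
    apply ext'
    funext l
    by_cases hl : l.length ≤ n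
    · show (if l.length ≤ n then some l else none).bind x.toFun = x.toFun l
      simp [hl]
    · show (if l.length ≤ n then some l else none).bind x.toFun = x.toFun l
      simp [hl, toFun_eq_none hl]
  mul_one x := by
    apply ext'
    funext l
    show (x.toFun l).bind (fun m => if m.length ≤ n then some m else none) = x.toFun l
    cases hx : x.toFun l with
    | none => rfl
    | some m =>
      have hm : m.length ≤ n := (length_map l m hx) ▸ x.length_le l m hx
      simp [hm]

@[simp] theorem mul_toFun (x y : PartialAut n) (l : List Bool) :
    (x * y).toFun l = (x.toFun l).bind y.toFun := rfl

@[simp] theorem one_toFun (l : List Bool) :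
    (1 : PartialAut n).toFun l = if l.length ≤ n then some l else none := by
  with_unfolding_all rfl

instance : Finite (PartialAut n) := by
  haveI hV : Finite {l : List Bool // l.length ≤ n} := (List.finite_length_le Bool n).to_subtype
  haveI := Fintype.ofFinite {l : List Bool // l.length ≤ n}
  apply Finite.of_injective
    (fun (x : PartialAut n) (v : {l : List Bool // l.length ≤ n}) =>
      (x.toFun v.1).bind fun m => if hm : m.length ≤ n then
        some (⟨m, hm⟩ : {l : List Bool // l.length ≤ n}) else none)
  intro x y h
  apply ext'
  funext l
  by_cases hl : l.length ≤ n
  · have h' := congrFun h ⟨l, hl⟩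
    try dsimp only at h'
    cases hx : x.toFun l with
    | none =>
      cases hy : y.toFun l with
      | none => rfl
      | some m =>
        have hm : m.length ≤ n := (length_map l m hy) ▸ y.length_le l m hy
        rw [hx, hy] at h'
        simp [hm] at h'
    | some m =>
      have hm : m.length ≤ n := (length_map l m hx) ▸ x.length_le l m hx
      cases hy : y.toFun l with
      | none =>
        rw [hx, hy] at h'
        simp [hm] at h'
      | some k =>
        have hk : k.length ≤ n := (length_map l k hy) ▸ y.length_le l k hy
        rw [hx, hy] at h'
        simp only [Option.bind_some, hm, hk, dif_pos] at h'
        rw [Option.some_inj, Subtype.mk.injEq] at h'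
        rw [h']
  · rw [toFun_eq_none hl, toFun_eq_none hl]

noncomputable instance : Fintype (PartialAut n) := Fintype.ofFinite _

end PartialAut

/-- The set of vertices of the `n`-th (bottom) level of the `n`-level binary rooted tree. -/
def Leaf (n : ℕ) : Type := {l : List Bool // l.length = n}

instance (n : ℕ) : DecidableEq (Leaf n) := fun a b =>
  decidable_of_iff (a.1 = b.1) Subtype.ext_iff.symm

instance (n : ℕ) : Finite (Leaf n) := by
  have : Finite {l : List Bool // l.length = n} := (List.finite_length_eq Bool n).to_subtype
  exact this

noncomputable instance (n : ℕ) : Fintype (Leaf n) := Fintype.ofFinite _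

/-- The domain of a partial automorphism. -/
def PartialAut.dom {n : ℕ} (x : PartialAut n) : Set (List Bool) := {l | x.toFun l ≠ none}

/-- `N_n`, the number of elements of the semigroup `P_n`. -/
noncomputable def Nn (n : ℕ) : ℕ := Nat.card (PartialAut n)

/-- `S_n(x)`: the bottom-level vertices surviving all iterates of `x`. -/
def survSet {n : ℕ} (x : PartialAut n) : Set (List Bool) :=
  {l | l.length = n ∧ ∀ m : ℕ, 1 ≤ m → l ∈ (x ^ m).dom}

/-- The ultimate rank `rk_n(x) = |S_n(x)|`. -/
noncomputable def urk {n : ℕ} (x : PartialAut n) : ℕ := Nat.card (survSet x)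

/-- The total ultimate rank `R_n`. -/
noncomputable def Rn (n : ℕ) : ℕ := ∑ x : PartialAut n, urk x

/-- `rank_n(x) = |dom(x) ∩ B_n|`. -/
noncomputable def lrank {n : ℕ} (x : PartialAut n) : ℕ :=
  Nat.card {l : List Bool | l ∈ x.dom ∧ l.length = n}

/-- The total rank `R'_n`. -/
noncomputable def Rn' (n : ℕ) : ℕ := ∑ x : PartialAut n, lrank x

/-- The action matrix `A_x` of `x` on the bottom level of the tree. -/
noncomputable def actionMatrix {n : ℕ} (x : PartialAut n) : Matrix (Leaf n) (Leaf n) ℂ :=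
  fun i j => if x.toFun i.1 = some j.1 then 1 else 0

/-- The multiset of eigenvalues (with multiplicity) of the action matrix of `x`,
i.e. the roots of its characteristic polynomial. -/
noncomputable def eigenvalues {n : ℕ} (x : PartialAut n) : Multiset ℂ :=
  (actionMatrix x).charpoly.roots

/-- `∫_D f dΞ_n` for the empirical eigenvalue measure
`Ξ_n = 2^{-n} ∑_k δ_{λ_k}` of `x`. -/
noncomputable def specInt {n : ℕ} (x : PartialAut n) (f : ℂ → ℂ) : ℂ :=
  (2 ^ n : ℂ)⁻¹ * ((eigenvalues x).map f).sum

/-- `p_n = R_n / (2^n N_n)`. -/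
noncomputable def pn (n : ℕ) : ℝ := (Rn n : ℝ) / (2 ^ n * Nn n)

/-- The idempotent partial automorphism which is the identity on `dom x`. -/
def PartialAut.domIdem {n : ℕ} (x : PartialAut n) : PartialAut n where
  toFun l := if x.toFun l = none then none else some l
  length_le := by
    intro l m h
    try dsimp only at h
    split at h
    · cases h
    · next hx =>
      cases hk : x.toFun l with
      | none => exact absurd hk hx
      | some k => exact x.length_le l k hk
  root_map := by simp [x.root_map]
  child_map := by
    intro l b m h
    try dsimp only at h ⊢
    split at h
    · cases h
    · next hx =>
      cases h
      cases hk : x.toFun (l ++ [b]) with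
      | none => exact absurd hk hx
      | some k =>
        obtain ⟨u, b', hu, _⟩ := x.child_map l b k hk
        exact ⟨l, b, by simp [hu], rfl⟩
  inj := by
    intro l l' m h h'
    try dsimp only at h h'
    split at h
    · cases h
    · cases h
      split at h'
      · cases h'
      · cases h'; rfl


section Aux

open Polynomial

theorem exists_eigenvec {κ : Type*} [Fintype κ] [DecidableEq κ] (M : Matrix κ κ ℂ) {μ : ℂ}
    (h : M.charpoly.IsRoot μ) : ∃ v : κ → ℂ, v ≠ 0 ∧ M.mulVec v = μ • v := by
  have hmap : ((Matrix.charmatrix M).map (Polynomial.evalRingHom μ)) = μ • (1 : Matrix κ κ ℂ) - M := by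
    ext i j
    by_cases hij : i = j
    · subst hij
      simp [Matrix.charmatrix_apply_eq, Matrix.one_apply]
    · simp [Matrix.charmatrix_apply_ne _ _ _ hij, Matrix.one_apply, hij]
  have hdet : (μ • (1 : Matrix κ κ ℂ) - M).det = 0 := by
    rw [← hmap, ← RingHom.mapMatrix_apply, ← RingHom.map_det]
    exact h
  obtain ⟨v, hv, hmv⟩ := Matrix.exists_mulVec_eq_zero_iff.mpr hdet
  refine ⟨v, hv, ?_⟩
  rw [Matrix.sub_mulVec, sub_eq_zero] at hmv
  rw [← hmv, Matrix.smul_mulVec, Matrix.one_mulVec]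

theorem pow_mulVec_eigen {κ : Type*} [Fintype κ] [DecidableEq κ] {M : Matrix κ κ ℂ} {μ : ℂ}
    {v : κ → ℂ} (h : M.mulVec v = μ • v) (m : ℕ) : (M ^ m).mulVec v = μ ^ m • v := by
  induction m with
  | zero => simp [Matrix.one_mulVec]
  | succ m ih =>
    rw [pow_succ, ← Matrix.mulVec_mulVec, h, Matrix.mulVec_smul, ih, pow_succ, smul_smul, mul_comm]

theorem abs_root_le_one {κ : Type*} [Fintype κ] [DecidableEq κ] {M : Matrix κ κ ℂ} {a p : ℕ}
    (hp : 1 ≤ p) (hMp : M ^ (a + p) = M ^ a) {μ : ℂ} (h : M.charpoly.IsRoot μ) :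
    ‖μ‖ ≤ 1 := by
  obtain ⟨v, hv, hmv⟩ := exists_eigenvec M h
  have h1 : μ ^ (a + p) • v = μ ^ a • v := by
    rw [← pow_mulVec_eigen hmv, ← pow_mulVec_eigen hmv, hMp]
  obtain ⟨i, hi⟩ := Function.ne_iff.mp hv
  have h2 : μ ^ (a + p) = μ ^ a := by
    have h3 := congrFun h1 i
    simp only [Pi.smul_apply, smul_eq_mul] at h3
    exact mul_right_cancel₀ hi h3
  by_cases h0 : μ = 0
  · simp [h0]
  · have h3 : μ ^ p = 1 := by
      rw [pow_add] at h2
      exact mul_left_cancel₀ (pow_ne_zero a h0) (by rw [h2, mul_one])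
    have h4 : ‖μ‖ ^ p = 1 := by rw [← norm_pow, h3, norm_one]
    by_contra hgt
    push_neg at hgt
    have h5 := one_lt_pow₀ hgt (by omega : p ≠ 0)
    rw [h4] at h5
    exact lt_irrefl _ h5

theorem root_eq_zero_of_pow_eq_zero {κ : Type*} [Fintype κ] [DecidableEq κ] {M : Matrix κ κ ℂ}
    {a : ℕ} (ha : 1 ≤ a) (hMa : M ^ a = 0) {μ : ℂ} (h : M.charpoly.IsRoot μ) : μ = 0 := by
  obtain ⟨v, hv, hmv⟩ := exists_eigenvec M h
  have h1 := pow_mulVec_eigen hmv a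
  rw [hMa, Matrix.zero_mulVec] at h1
  obtain ⟨i, hi⟩ := Function.ne_iff.mp hv
  have h2 := congrFun h1 i
  simp only [Pi.zero_apply, Pi.smul_apply, smul_eq_mul] at h2
  simp only [Pi.zero_apply] at hi
  rcases mul_eq_zero.mp h2.symm with h3 | h3
  · exact pow_eq_zero_iff (by omega) |>.mp h3
  · exact absurd h3 hi

theorem card_leaf (n : ℕ) : Fintype.card (Leaf n) = 2 ^ n := by
  have e : Leaf n ≃ (Fin n → Bool) :=
    (Equiv.refl (List.Vector Bool n) : Leaf n ≃ List.Vector Bool n).trans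
      (Equiv.vectorEquivFin Bool n)
  rw [Fintype.card_congr e]
  simp

namespace PartialAut

variable {n : ℕ}

theorem pow_toFun (x : PartialAut n) (a b : ℕ) (l : List Bool) :
    (x ^ (a + b)).toFun l = ((x ^ a).toFun l).bind (x ^ b).toFun := by
  rw [pow_add]; rfl

theorem toFun_pow_ne_none_of_le (x : PartialAut n) {a b : ℕ} (h : a ≤ b) {l : List Bool}
    (hb : (x ^ b).toFun l ≠ none) : (x ^ a).toFun l ≠ none := by
  intro ha
  apply hb
  obtain ⟨c, rfl⟩ := Nat.exists_eq_add_of_le h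
  rw [pow_toFun, ha]
  rfl

theorem pow_add_mul_period (x : PartialAut n) {a p : ℕ} (h : x ^ (a + p) = x ^ a) (k : ℕ) :
    x ^ (a + k * p) = x ^ a := by
  induction k with
  | zero => simp
  | succ k ih =>
    have he : a + (k + 1) * p = (a + p) + k * p := by ring
    rw [he, pow_add, h, ← pow_add, ih]

theorem exists_pow_period (x : PartialAut n) :
    ∃ a p : ℕ, 1 ≤ a ∧ 1 ≤ p ∧ x ^ (a + p) = x ^ a := by
  obtain ⟨i, j, hij, h⟩ := Finite.exists_ne_map_eq_of_infinite (fun m : ℕ => x ^ (m + 1))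
  rcases lt_or_gt_of_ne hij with hlt | hlt
  · exact ⟨i + 1, j - i, by omega, by omega,
      by rw [show i + 1 + (j - i) = j + 1 by omega]; exact h.symm⟩
  · exact ⟨j + 1, i - j, by omega, by omega,
      by rw [show j + 1 + (i - j) = i + 1 by omega]; exact h⟩

theorem actionMatrix_one : actionMatrix (1 : PartialAut n) = 1 := by
  ext i j
  have hi : i.1.length ≤ n := le_of_eq i.2
  simp only [actionMatrix, one_toFun, hi, if_true, Matrix.one_apply]
  by_cases h : i = j
  · subst h; simp
  · have : i.1 ≠ j.1 := fun hc => h (Subtype.ext hc)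
    simp [h, this]

theorem actionMatrix_mul (x y : PartialAut n) :
    actionMatrix (x * y) = actionMatrix x * actionMatrix y := by
  ext i j
  rw [Matrix.mul_apply]
  cases hx : x.toFun i.1 with
  | none => simp [actionMatrix, hx]
  | some u =>
    have hu : u.length = n := (x.length_map i.1 u hx).trans i.2
    have hs : (∑ k : Leaf n, actionMatrix x i k * actionMatrix y k j)
        = actionMatrix x i ⟨u, hu⟩ * actionMatrix y ⟨u, hu⟩ j := by
      apply Finset.sum_eq_single
      · intro k _ hk
        have hne : x.toFun i.1 ≠ some k.1 := by
          rw [hx]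
          intro hc
          exact hk (Subtype.ext (Option.some_inj.mp hc).symm)
        simp [actionMatrix, hne]
      · intro hmem
        exact absurd (Finset.mem_univ _) hmem
    rw [hs]
    simp [actionMatrix, hx]

theorem actionMatrix_pow (x : PartialAut n) (m : ℕ) :
    actionMatrix (x ^ m) = actionMatrix x ^ m := by
  induction m with
  | zero => rw [pow_zero, pow_zero]; exact actionMatrix_one
  | succ m ih => rw [pow_succ, pow_succ, actionMatrix_mul, ih]

end PartialAut

theorem key_bound {n : ℕ} (x : PartialAut n) (f : ℂ → ℂ) (M : ℝ)
    (hM : IsGreatest ((fun z => ‖f z‖) '' Metric.closedBall (0 : ℂ) 1) M) :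
    ‖specInt x f - f 0‖ ≤ ((2 : ℝ) ^ n)⁻¹ * (2 * M) * urk x := by
  classical
  obtain ⟨a, p, ha, hp, hper⟩ := x.exists_pow_period
  set A := actionMatrix x with hAdef
  have hA : A ^ (a + p) = A ^ a := by
    rw [hAdef, ← PartialAut.actionMatrix_pow, ← PartialAut.actionMatrix_pow, hper]
  -- the surviving set
  have hdomstab : ∀ m, 1 ≤ m → ∀ l : List Bool,
      (x ^ a).toFun l ≠ none → (x ^ m).toFun l ≠ none := by
    intro m hm l hl
    have h1 : m ≤ a + m * p := by
      have := Nat.le_mul_of_pos_right m (by omega : 0 < p)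
      omega
    refine x.toFun_pow_ne_none_of_le h1 ?_
    rw [x.pow_add_mul_period hper m]
    exact hl
  have hsurv : survSet x = {l | l.length = n ∧ (x ^ a).toFun l ≠ none} := by
    ext l
    constructor
    · rintro ⟨h1, h2⟩
      exact ⟨h1, h2 a ha⟩
    · rintro ⟨h1, h2⟩
      exact ⟨h1, fun m hm => hdomstab m hm l h2⟩
  set q : Leaf n → Prop := fun i => (x ^ a).toFun i.1 ≠ none with hqdef
  have hurk : urk x = Fintype.card {i : Leaf n // q i} := by
    rw [urk, hsurv]
    have e : {l : List Bool // l ∈ {l : List Bool | l.length = n ∧ (x ^ a).toFun l ≠ none}} ≃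
        {i : Leaf n // q i} :=
      { toFun := fun l => ⟨⟨l.1, l.2.1⟩, l.2.2⟩
        invFun := fun i => ⟨i.1.1, i.1.2, i.2⟩
        left_inv := fun l => rfl
        right_inv := fun i => rfl }
    rw [Nat.card_congr e, Nat.card_eq_fintype_card]
  -- x maps q into q
  have hdom1 : ∀ i : Leaf n, q i → (x ^ (a + 1)).toFun i.1 ≠ none := by
    intro i hi
    refine x.toFun_pow_ne_none_of_le (by omega : a + 1 ≤ a + p) ?_
    rw [hper]
    exact hi
  have hmapq : ∀ (i j : Leaf n), q i → x.toFun i.1 = some j.1 → q j := by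
    intro i j hi hij
    have h1 := hdom1 i hi
    rw [show a + 1 = 1 + a by omega, x.pow_toFun 1 a, pow_one, hij, Option.bind_some] at h1
    exact h1
  -- block decomposition
  set e := (Equiv.sumCompl q).symm with hedef
  set P : Matrix {i : Leaf n // q i} {i : Leaf n // q i} ℂ :=
    Matrix.of (fun i j => A i.1 j.1) with hPdef
  set Q : Matrix {i : Leaf n // ¬ q i} {i : Leaf n // ¬ q i} ℂ :=
    Matrix.of (fun i j => A i.1 j.1) with hQdef
  set R : Matrix {i : Leaf n // ¬ q i} {i : Leaf n // q i} ℂ :=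
    Matrix.of (fun i j => A i.1 j.1) with hRdef
  have hreindex : Matrix.reindex e e A = Matrix.fromBlocks P 0 R Q := by
    ext i j
    cases i with
    | inl i =>
      cases j with
      | inl j => rfl
      | inr j =>
        simp only [Matrix.reindex_apply, Matrix.submatrix_apply, hedef, Equiv.symm_symm,
          Equiv.sumCompl_apply_inl, Equiv.sumCompl_apply_inr, Matrix.fromBlocks_apply₁₂,
          Matrix.zero_apply]
        by_contra hc
        have h1 : x.toFun i.1.1 = some j.1.1 := by
          by_contra h2
          exact hc (by simp [hAdef, actionMatrix, h2])
        exact j.2 (hmapq i.1 j.1 i.2 h1)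
    | inr i =>
      cases j with
      | inl j => rfl
      | inr j => rfl
  have hcp : A.charpoly = P.charpoly * Q.charpoly := by
    rw [← Matrix.charpoly_reindex e A, hreindex, Matrix.charpoly_fromBlocks_zero₁₂]
  -- Q is nilpotent
  have hQpow : ∀ m (i j : {i : Leaf n // ¬ q i}), (Q ^ m) i j ≠ 0 →
      (x ^ m).toFun i.1.1 = some j.1.1 := by
    intro m
    induction m with
    | zero =>
      intro i j h
      rw [pow_zero] at h
      have hij : i = j := by
        by_contra hne
        exact h (Matrix.one_apply_ne hne)
      subst hij
      rw [pow_zero]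
      show (1 : PartialAut n).toFun i.1.1 = some i.1.1
      simp [le_of_eq i.1.2]
    | succ m ih =>
      intro i j h
      rw [pow_succ, Matrix.mul_apply] at h
      obtain ⟨k, -, hk⟩ := Finset.exists_ne_zero_of_sum_ne_zero h
      have h1 := ih i k (left_ne_zero_of_mul hk)
      have h2 : Q k j ≠ 0 := right_ne_zero_of_mul hk
      have h3 : x.toFun k.1.1 = some j.1.1 := by
        by_contra hc
        exact h2 (by simp [hQdef, hAdef, actionMatrix, hc])
      rw [x.pow_toFun m 1, h1, Option.bind_some, pow_one]
      exact h3
  have hQa : Q ^ a = 0 := by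
    ext i j
    rw [Matrix.zero_apply]
    by_contra hij
    apply i.2
    show (x ^ a).toFun i.1.1 ≠ none
    rw [hQpow a i j hij]
    simp
  -- roots
  have hPne : P.charpoly ≠ 0 := P.charpoly_monic.ne_zero
  have hQne : Q.charpoly ≠ 0 := Q.charpoly_monic.ne_zero
  have hroots : A.charpoly.roots = P.charpoly.roots + Q.charpoly.roots := by
    rw [hcp, Polynomial.roots_mul (mul_ne_zero hPne hQne)]
  have hcardA : Multiset.card A.charpoly.roots = 2 ^ n := by
    have hsp : A.charpoly.Splits := IsAlgClosed.splits A.charpoly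
    rw [Polynomial.splits_iff_card_roots.mp hsp, Matrix.charpoly_natDegree_eq_dim, card_leaf]
  have hQzero : ∀ μ ∈ Q.charpoly.roots, μ = 0 := by
    intro μ hμ
    exact root_eq_zero_of_pow_eq_zero ha hQa ((Polynomial.mem_roots hQne).mp hμ)
  have hPabs : ∀ μ ∈ P.charpoly.roots, ‖μ‖ ≤ 1 := by
    intro μ hμ
    have hμA : μ ∈ A.charpoly.roots := by
      rw [hroots]
      exact Multiset.mem_add.mpr (Or.inl hμ)
    exact abs_root_le_one hp hA ((Polynomial.mem_roots A.charpoly_monic.ne_zero).mp hμA)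
  have hcardP : Multiset.card P.charpoly.roots ≤ urk x := by
    rw [hurk]
    calc Multiset.card P.charpoly.roots ≤ P.charpoly.natDegree := P.charpoly.card_roots'
    _ = Fintype.card {i : Leaf n // q i} := Matrix.charpoly_natDegree_eq_dim P
  -- bounds on f
  have hM0 : 0 ≤ M := by
    obtain ⟨z, hz, hzM⟩ := hM.1
    rw [← hzM]
    exact norm_nonneg _
  have hfb : ∀ z : ℂ, ‖z‖ ≤ 1 → ‖f z‖ ≤ M := by
    intro z hz
    exact hM.2 ⟨z, by simpa [Metric.mem_closedBall, Complex.dist_eq] using hz, rfl⟩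
  -- sum manipulation
  have hmsub : ∀ (s : Multiset ℂ),
      (s.map (fun μ => f μ - f 0)).sum = (s.map f).sum - (Multiset.card s : ℂ) * f 0 := by
    intro s
    induction s using Multiset.induction_on with
    | empty => simp
    | cons c s ih =>
        simp only [Multiset.map_cons, Multiset.sum_cons, Multiset.card_cons, ih]
        push_cast
        ring
  have h2n : ((2 : ℂ) ^ n) ≠ 0 := pow_ne_zero _ two_ne_zero
  have hspec : specInt x f = ((2 : ℂ) ^ n)⁻¹ * ((A.charpoly.roots.map f).sum) := rfl
  have hsum : specInt x f - f 0 =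
      ((2 : ℂ) ^ n)⁻¹ * ((A.charpoly.roots.map (fun μ => f μ - f 0)).sum) := by
    rw [hspec, hmsub, hcardA, mul_sub]
    push_cast
    rw [inv_mul_cancel_left₀ h2n]
  rw [hsum]
  have habs : ‖((2 : ℂ) ^ n)⁻¹ *
      ((A.charpoly.roots.map (fun μ => f μ - f 0)).sum)‖ =
      ((2 : ℝ) ^ n)⁻¹ * ‖(A.charpoly.roots.map (fun μ => f μ - f 0)).sum‖ := by
    rw [norm_mul, norm_inv, norm_pow, Complex.norm_two]
  rw [habs]
  have hstep : ‖(A.charpoly.roots.map (fun μ => f μ - f 0)).sum‖ ≤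
      (urk x : ℝ) * (2 * M) := by
    have h1 : ‖(A.charpoly.roots.map (fun μ => f μ - f 0)).sum‖ ≤
        ((A.charpoly.roots.map (fun μ => f μ - f 0)).map Norm.norm).sum := by
      simpa using
        norm_multiset_sum_le (A.charpoly.roots.map (fun μ => f μ - f 0))
    refine h1.trans ?_
    rw [Multiset.map_map, hroots, Multiset.map_add, Multiset.sum_add]
    have hQ0 : ((Q.charpoly.roots.map (Norm.norm ∘ fun μ => f μ - f 0))).sum = 0 := by
      apply Multiset.sum_eq_zero
      intro t ht
      obtain ⟨μ, hμ, rfl⟩ := Multiset.mem_map.mp ht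
      simp [hQzero μ hμ]
    rw [hQ0, add_zero]
    have hbnd : ∀ t ∈ (P.charpoly.roots.map (Norm.norm ∘ fun μ => f μ - f 0)), t ≤ 2 * M := by
      intro t ht
      obtain ⟨μ, hμ, rfl⟩ := Multiset.mem_map.mp ht
      show ‖f μ - f 0‖ ≤ 2 * M
      calc ‖f μ - f 0‖ ≤ ‖f μ‖ + ‖f 0‖ := by
            simpa using norm_sub_le (f μ) (f 0)
      _ ≤ M + M := add_le_add (hfb μ (hPabs μ hμ)) (hfb 0 (by simp))
      _ = 2 * M := by ring
    calc ((P.charpoly.roots.map (Norm.norm ∘ fun μ => f μ - f 0))).sum ≤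
        (Multiset.card (P.charpoly.roots.map (Norm.norm ∘ fun μ => f μ - f 0))) • (2 * M) :=
          Multiset.sum_le_card_nsmul _ _ hbnd
    _ = (Multiset.card P.charpoly.roots : ℝ) * (2 * M) := by
          rw [Multiset.card_map]; rw [nsmul_eq_mul]
    _ ≤ (urk x : ℝ) * (2 * M) := by
          apply mul_le_mul_of_nonneg_right _ (by positivity)
          exact_mod_cast hcardP
  calc ((2 : ℝ) ^ n)⁻¹ * ‖(A.charpoly.roots.map (fun μ => f μ - f 0)).sum‖ ≤
      ((2 : ℝ) ^ n)⁻¹ * ((urk x : ℝ) * (2 * M)) := by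
        apply mul_le_mul_of_nonneg_left hstep (by positivity)
  _ = ((2 : ℝ) ^ n)⁻¹ * (2 * M) * urk x := by ring

end Aux

/-- for every continuous `f` on the closed unit disc `D` with maximum
modulus `M` on `D`, the expectation over a uniformly random `x ∈ P_n` satisfies
`E |∫_D f dΞ_n − f(0)| ≤ 2 M p_n`. -/
theorem expectation_bound (n : ℕ) (f : ℂ → ℂ)
    (hf : ContinuousOn f (Metric.closedBall (0 : ℂ) 1)) (M : ℝ)
    (hM : IsGreatest ((fun z => ‖f z‖) '' Metric.closedBall (0 : ℂ) 1) M) :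
    (Nn n : ℝ)⁻¹ * ∑ x : PartialAut n, ‖specInt x f - f 0‖
      ≤ 2 * M * pn n := by
  classical
  have hM0 : 0 ≤ M := by
    obtain ⟨z, hz, hzM⟩ := hM.1
    rw [← hzM]
    exact norm_nonneg _
  have hNpos : 0 < (Nn n : ℝ) := by
    have : 0 < Nn n := Nat.card_pos
    exact_mod_cast this
  have hstep : ∑ x : PartialAut n, ‖specInt x f - f 0‖ ≤
      ((2 : ℝ) ^ n)⁻¹ * (2 * M) * (Rn n : ℝ) := by
    calc ∑ x : PartialAut n, ‖specInt x f - f 0‖ ≤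
        ∑ x : PartialAut n, ((2 : ℝ) ^ n)⁻¹ * (2 * M) * urk x :=
          Finset.sum_le_sum (fun x _ => key_bound x f M hM)
    _ = ((2 : ℝ) ^ n)⁻¹ * (2 * M) * ∑ x : PartialAut n, (urk x : ℝ) := by
          rw [Finset.mul_sum]
    _ = ((2 : ℝ) ^ n)⁻¹ * (2 * M) * (Rn n : ℝ) := by
          rw [Rn]
          push_cast
          ring
  calc (Nn n : ℝ)⁻¹ * ∑ x : PartialAut n, ‖specInt x f - f 0‖ ≤
      (Nn n : ℝ)⁻¹ * (((2 : ℝ) ^ n)⁻¹ * (2 * M) * (Rn n : ℝ)) := by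
        apply mul_le_mul_of_nonneg_left hstep (by positivity)
  _ = 2 * M * pn n := by
        rw [pn, div_eq_mul_inv, mul_inv]
        ring
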